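/- Detailed balance of the Swendsen–Wang move through a fixed edge configuration: for every edge configuration w and all spin configurations s and t on a finite simple graph G, W_V(s) · P(s,w) · Q(w,t) = W_V(t) · P(t,w) · Q(w,s). -/

import Mathlib

open Classical

noncomputable section

variable {V : Type*} [Fintype V] [DecidableEq V]

/-- Product `s i * s j` of spins over an unordered edge `{i, j}`. -/
def pairProd (s : V → ℝ) : Sym2 V → ℝ :=
  Sym2.lift ⟨fun i j => s i * s j, fun _ _ => mul_comm _ _⟩

/-- Unnormalized Gibbs weight
`W_V(s) = exp (β Σ_{{i,j} ∈ E} s_i s_j + β Σ_i h_i s_i)`. -/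
def WV (G : SimpleGraph V) [DecidableRel G.Adj] (β : ℝ) (h : V → ℝ) (s : V → ℝ) : ℝ :=
  Real.exp (β * ∑ e ∈ G.edgeFinset, pairProd s e + β * ∑ i : V, h i * s i)

/-- Edge factor of the joint vertex-edge weight:
`(1 - e^{-2β})` if `w_{ij} = 1` and `s_i = s_j`, `e^{-2β}` if `w_{ij} = 0`, else `0`. -/
def edgeFactorVE (β : ℝ) (s : V → ℝ) (b : Bool) : Sym2 V → ℝ :=
  Sym2.lift ⟨fun i j =>
    if b then (if s i = s j then 1 - Real.exp (-2 * β) else 0) else Real.exp (-2 * β),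
    by intro i j; by_cases hb : b <;> simp [hb, eq_comm]⟩

/-- Unnormalized joint vertex-edge weight `W_VE(s, w)`. -/
def WVE (G : SimpleGraph V) [DecidableRel G.Adj] (β : ℝ) (h : V → ℝ) (s : V → ℝ)
    (w : G.edgeSet → Bool) : ℝ :=
  (∏ e : G.edgeSet, edgeFactorVE β s (w e) e.val) * Real.exp (β * ∑ i : V, h i * s i)

/-- Edge factor of the Swendsen-Wang edge-step probability: if `s_i = s_j` then
`(1 - e^{-2β})` for `w_{ij} = 1` and `e^{-2β}` for `w_{ij} = 0`; otherwise `0` for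
`w_{ij} = 1` and `1` for `w_{ij} = 0`. -/
def edgeFactorP (β : ℝ) (s : V → ℝ) (b : Bool) : Sym2 V → ℝ :=
  Sym2.lift ⟨fun i j =>
    if s i = s j then (if b then 1 - Real.exp (-2 * β) else Real.exp (-2 * β))
    else (if b then 0 else 1),
    by intro i j; simp [eq_comm]⟩

/-- Swendsen-Wang edge-step probability `P(s, w)`. -/
def swP (G : SimpleGraph V) [DecidableRel G.Adj] (β : ℝ) (s : V → ℝ)
    (w : G.edgeSet → Bool) : ℝ :=
  ∏ e : G.edgeSet, edgeFactorP β s (w e) e.val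

/-- Spanning subgraph of `G` whose edges are the edges `e` with `w e = 1`. -/
def openSubgraph (G : SimpleGraph V) [DecidableRel G.Adj] (w : G.edgeSet → Bool) :
    SimpleGraph V where
  Adj i j := ∃ hij : G.Adj i j, w ⟨Sym2.mk i j, G.mem_edgeSet.mpr hij⟩ = true
  symm := by
    constructor
    rintro i j ⟨hij, hw⟩
    refine ⟨hij.symm, ?_⟩
    have he : (⟨Sym2.mk j i, G.mem_edgeSet.mpr hij.symm⟩ : G.edgeSet)
        = ⟨Sym2.mk i j, G.mem_edgeSet.mpr hij⟩ := Subtype.ext (Sym2.eq_swap)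
    rw [he]; exact hw
  loopless := by constructor; rintro i ⟨hij, -⟩; exact G.loopless.irrefl i hij

/-- `h_γ = Σ_{i ∈ γ} h_i`: sum of the field over a connected component `γ ∈ C_w`. -/
def hComp (G : SimpleGraph V) [DecidableRel G.Adj] (h : V → ℝ) (w : G.edgeSet → Bool)
    (γ : (openSubgraph G w).ConnectedComponent) : ℝ :=
  ∑ i ∈ Finset.univ.filter (fun i => (openSubgraph G w).connectedComponentMk i = γ), h i

/-- A configuration is compatible with the edge configuration `w` if it is constant on each
connected component of the subgraph of open edges. -/
def Compatible (G : SimpleGraph V) [DecidableRel G.Adj] (w : G.edgeSet → Bool)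
    (t : V → ℝ) : Prop :=
  ∀ i j : V, (openSubgraph G w).connectedComponentMk i = (openSubgraph G w).connectedComponentMk j
    → t i = t j

/-- Swendsen-Wang spin-step probability `Q(w, t)`: for `t` compatible with `w`, the product
over components `γ ∈ C_w` of `e^{β h_γ τ_γ} / (e^{β h_γ} + e^{-β h_γ})`, where
`τ_γ = t γ.out` is the common value of `t` on `γ`; and `0` for incompatible `t`. -/
def swQ (G : SimpleGraph V) [DecidableRel G.Adj] (β : ℝ) (h : V → ℝ) (w : G.edgeSet → Bool)
    (t : V → ℝ) : ℝ :=
  if Compatible G w t then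
    ∏ γ : (openSubgraph G w).ConnectedComponent,
      Real.exp (β * hComp G h w γ * t γ.out) /
        (Real.exp (β * hComp G h w γ) + Real.exp (-(β * hComp G h w γ)))
  else 0

/-- Unnormalized edge weight
`W_E(w) = Π_{w_e = 1} (1 - e^{-2β}) · Π_{w_e = 0} e^{-2β} · Π_{γ ∈ C_w} (e^{β h_γ} + e^{-β h_γ})`. -/
def WE (G : SimpleGraph V) [DecidableRel G.Adj] (β : ℝ) (h : V → ℝ)
    (w : G.edgeSet → Bool) : ℝ :=
  (∏ _e ∈ Finset.univ.filter (fun e : G.edgeSet => w e = true), (1 - Real.exp (-2 * β))) *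
  (∏ _e ∈ Finset.univ.filter (fun e : G.edgeSet => w e = false), Real.exp (-2 * β)) *
  ∏ γ : (openSubgraph G w).ConnectedComponent,
    (Real.exp (β * hComp G h w γ) + Real.exp (-(β * hComp G h w γ)))

/-! The Edwards–Sokal coupling. On each edge, `e^{β s_i s_j} P_{ij}(s, w) = e^β · (W_VE)_{ij}(s, w)`
for `±1` spins, so `W_V(s) P(s, w) = e^{β |E|} W_VE(s, w)`. The joint weight vanishes unless `s`
is compatible with `w`, and then factorises as `W_VE(s, w) = W_E(w) Q(w, s)`, the partition
function `e^{β h_γ} + e^{-β h_γ}` of each cluster cancelling against the denominator of `Q`.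
Hence `W_V(s) P(s, w) Q(w, t) = e^{β |E|} W_E(w) Q(w, s) Q(w, t)`, which is symmetric in `s, t`. -/

theorem spin_mul_spin {x y : ℝ} (hx : x = 1 ∨ x = -1) (hy : y = 1 ∨ y = -1) :
    x * y = if x = y then 1 else -1 := by
  rcases hx with rfl | rfl <;> rcases hy with rfl | rfl <;> norm_num

theorem exp_mul_pairProd_mul_edgeFactorP {ι : Type*} (β : ℝ) {s : ι → ℝ} (b : Bool)
    {i j : ι} (hi : s i = 1 ∨ s i = -1) (hj : s j = 1 ∨ s j = -1) :
    Real.exp (β * pairProd s s(i, j)) * edgeFactorP β s b s(i, j)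
      = Real.exp β * edgeFactorVE β s b s(i, j) := by
  change Real.exp (β * (s i * s j)) * _ = _
  rw [spin_mul_spin hi hj]
  by_cases hij : s i = s j
  · simp only [edgeFactorP, edgeFactorVE, Sym2.lift_mk, hij, if_true, mul_one]
  · cases b
    · simp only [edgeFactorP, edgeFactorVE, Sym2.lift_mk, hij, Bool.false_eq_true, if_false,
        mul_one]
      rw [← Real.exp_add]
      ring_nf
    · simp [edgeFactorP, edgeFactorVE, hij]

theorem SimpleGraph.Reachable.eq_of_forall_adj {W α : Type*} {H : SimpleGraph W} {f : W → α}
    {u v : W} (huv : H.Reachable u v) (hf : ∀ x y, H.Adj x y → f x = f y) : f u = f v := by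
  obtain ⟨p⟩ := huv
  induction p with
  | nil => rfl
  | cons hxy _ ih => exact (hf _ _ hxy).trans ih

section SwendsenWang

variable (G : SimpleGraph V) [DecidableRel G.Adj] (β : ℝ) (h : V → ℝ)
  (w : G.edgeSet → Bool)

omit [DecidableEq V] in
theorem WV_mul_swP {s : V → ℝ} (hs : ∀ i, s i = 1 ∨ s i = -1) :
    WV G β h s * swP G β s w = Real.exp β ^ Fintype.card G.edgeSet * WVE G β h s w := by
  have hedge : ∀ e : G.edgeSet, Real.exp (β * pairProd s e) * edgeFactorP β s (w e) e
      = Real.exp β * edgeFactorVE β s (w e) e := by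
    rintro ⟨e, -⟩
    induction e with
    | _ i j => exact exp_mul_pairProd_mul_edgeFactorP β _ (hs i) (hs j)
  have hsum : ∑ e ∈ G.edgeFinset, pairProd s e = ∑ e : G.edgeSet, pairProd s e := by
    rw [SimpleGraph.edgeFinset, ← Finset.sum_set_coe]
  calc WV G β h s * swP G β s w
      = (∏ e : G.edgeSet, Real.exp (β * pairProd s e) * edgeFactorP β s (w e) e)
          * Real.exp (β * ∑ i : V, h i * s i) := by
        rw [WV, swP, Real.exp_add, hsum, Finset.mul_sum, Real.exp_sum,
          Finset.prod_mul_distrib]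
        ring
    _ = Real.exp β ^ Fintype.card G.edgeSet * WVE G β h s w := by
        rw [Finset.prod_congr rfl fun e _ => hedge e, Finset.prod_mul_distrib,
          Finset.prod_const, Finset.card_univ, WVE, mul_assoc]

omit [DecidableEq V] in
theorem WVE_eq_zero_of_not_compatible {s : V → ℝ} (hs : ¬ Compatible G w s) :
    WVE G β h s w = 0 := by
  obtain ⟨u, v, ⟨huv, hw⟩, hne⟩ : ∃ u v, (openSubgraph G w).Adj u v ∧ s u ≠ s v := by
    by_contra! hadj
    exact hs fun i j hij => (SimpleGraph.ConnectedComponent.exact hij).eq_of_forall_adj hadj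
  refine mul_eq_zero_of_left (Finset.prod_eq_zero (Finset.mem_univ ⟨s(u, v), huv⟩) ?_) _
  simp [edgeFactorVE, hw, hne]

omit [DecidableEq V] in
theorem prod_edgeFactorVE_of_compatible {s : V → ℝ} (hs : Compatible G w s) :
    ∏ e : G.edgeSet, edgeFactorVE β s (w e) e
      = (∏ _e ∈ Finset.univ.filter (fun e : G.edgeSet => w e = true), (1 - Real.exp (-2 * β)))
        * ∏ _e ∈ Finset.univ.filter (fun e : G.edgeSet => w e = false), Real.exp (-2 * β) := by
  have hedge : ∀ e : G.edgeSet, edgeFactorVE β s (w e) e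
      = if w e = true then 1 - Real.exp (-2 * β) else Real.exp (-2 * β) := by
    rintro ⟨e, he⟩
    induction e with
    | _ i j =>
      cases hw : w ⟨s(i, j), he⟩
      · rfl
      · have hij : s i = s j :=
          hs i j (SimpleGraph.ConnectedComponent.connectedComponentMk_eq_of_adj
            ⟨G.mem_edgeSet.mp he, hw⟩)
        simp [edgeFactorVE, hij]
  simp only [hedge, Finset.prod_ite, Bool.not_eq_true]

theorem sum_field_mul_eq_sum_hComp_mul {s : V → ℝ} (hs : Compatible G w s) :
    ∑ i : V, h i * s i
      = ∑ γ : (openSubgraph G w).ConnectedComponent, hComp G h w γ * s γ.out := by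
  rw [← Finset.sum_fiberwise_of_maps_to (g := (openSubgraph G w).connectedComponentMk)
    (fun i _ => Finset.mem_univ _)]
  refine Finset.sum_congr rfl fun γ _ => ?_
  rw [hComp, Finset.sum_mul]
  refine Finset.sum_congr rfl fun i hi => ?_
  rw [hs i γ.out ((Finset.mem_filter.mp hi).2.trans γ.out_eq.symm)]

theorem WVE_eq_WE_mul_swQ (s : V → ℝ) : WVE G β h s w = WE G β h w * swQ G β h w s := by
  by_cases hs : Compatible G w s
  · have hZ : ∏ γ : (openSubgraph G w).ConnectedComponent,
        (Real.exp (β * hComp G h w γ) + Real.exp (-(β * hComp G h w γ))) ≠ 0 :=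
      Finset.prod_ne_zero_iff.mpr fun γ _ => by positivity
    rw [WVE, WE, swQ, if_pos hs, prod_edgeFactorVE_of_compatible G β w hs,
      sum_field_mul_eq_sum_hComp_mul G h w hs, Finset.mul_sum, Real.exp_sum,
      Finset.prod_div_distrib, mul_assoc _ _ (_ / _), mul_div_cancel₀ _ hZ]
    simp only [mul_assoc]
  · rw [WVE_eq_zero_of_not_compatible G β h w hs, swQ, if_neg hs, mul_zero]

end SwendsenWang

theorem swendsenWang_detailed_balance_via_edgeConfig_general (G : SimpleGraph V) [DecidableRel G.Adj]
    (β : ℝ) (h : V → ℝ) (w : G.edgeSet → Bool) (s t : V → ℝ)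
    (hs : ∀ i, s i = 1 ∨ s i = -1) (ht : ∀ i, t i = 1 ∨ t i = -1) :
    WV G β h s * swP G β s w * swQ G β h w t
      = WV G β h t * swP G β t w * swQ G β h w s := by
  rw [WV_mul_swP G β h w hs, WV_mul_swP G β h w ht, WVE_eq_WE_mul_swQ, WVE_eq_WE_mul_swQ]
  ring

/-- Detailed balance of the Swendsen-Wang move through a fixed edge
configuration `w`: `W_V(s) · P(s, w) · Q(w, t) = W_V(t) · P(t, w) · Q(w, s)` for all spin
configurations `s`, `t`. -/
theorem swendsenWang_detailed_balance_via_edgeConfig (G : SimpleGraph V) [DecidableRel G.Adj]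
    (β : ℝ) (hβ : 0 < β) (h : V → ℝ) (w : G.edgeSet → Bool) (s t : V → ℝ)
    (hs : ∀ i, s i = 1 ∨ s i = -1) (ht : ∀ i, t i = 1 ∨ t i = -1) :
    WV G β h s * swP G β s w * swQ G β h w t
      = WV G β h t * swP G β t w * swQ G β h w s :=
  swendsenWang_detailed_balance_via_edgeConfig_general G β h w s t hs ht
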